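/- arXiv:2111.03417 — 9 statements merged into one kernel-verified Lean document; each statement's English description precedes it below -/
import Mathlib

section
/- Let R be a commutative ring and let M be a module over T(R[x]), regarded as an R-module via the canonical ring map R → T(R[x]). Then M is a Lucas R-module; that is, M is Q-torsion-free, and for every finitely generated semi-regular ideal J of R and every R-linear map φ : J → M there exists m ∈ M with φ(a) = a • m for all a ∈ J (equivalently, Ext^1_R(R/J, M) = 0). -/
open Polynomial TensorProduct

universe u v

/-- An ideal is *semi-regular* if it contains a finitely generated dense subideal
(an ideal is *dense* if its annihilator is zero). -/
def Ideal.IsSemiregular {R : Type*} [CommRing R] (I : Ideal R) : Prop :=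
  ∃ J : Ideal R, J ≤ I ∧ J.FG ∧ Submodule.annihilator J = ⊥

/-- A module is *Q-torsion* if every element is annihilated by some finitely
generated semi-regular ideal. -/
def IsQTorsion (R : Type*) (M : Type*) [CommRing R] [AddCommGroup M] [Module R M] : Prop :=
  ∀ m : M, ∃ I : Ideal R, I.FG ∧ I.IsSemiregular ∧ ∀ a ∈ I, a • m = 0

/-- From a semi-regular ideal we can extract finitely many elements whose
associated polynomial is a non-zerodivisor. -/
lemma Ideal.IsSemiregular.exists_poly {R : Type u} [CommRing R] {I : Ideal R}
    (hI : I.IsSemiregular) :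
    ∃ (n : ℕ) (g : Fin n → R), (∀ i, g i ∈ I) ∧
      (∑ i : Fin n, C (g i) * X ^ (i : ℕ)) ∈ nonZeroDivisors R[X] := by
  obtain ⟨J, hJI, ⟨s, hs⟩, hann⟩ := hI
  refine ⟨s.card, fun i => (s.equivFin.symm i : R), ?_, ?_⟩
  · intro i
    exact hJI (hs ▸ Ideal.subset_span (s.equivFin.symm i).2)
  · set g : Fin s.card → R := fun i => (s.equivFin.symm i : R) with hg
    set f : R[X] := ∑ i : Fin s.card, C (g i) * X ^ (i : ℕ) with hf
    have hcoeff : ∀ i : Fin s.card, f.coeff i = g i := by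
      intro i
      rw [hf, Polynomial.finset_sum_coeff]
      rw [Finset.sum_eq_single i]
      · simp
      · intro j _ hji
        simp [coeff_X_pow, Fin.val_eq_val, (Ne.symm hji)]
      · simp
    rw [Polynomial.mem_nonZeroDivisors_iff]
    intro a ha
    have key : ∀ i : Fin s.card, a * g i = 0 := by
      intro i
      have := congrArg (fun p => Polynomial.coeff p i) ha
      simpa [coeff_smul, hcoeff i, smul_eq_mul] using this
    have haJ : a ∈ Submodule.annihilator J := by
      rw [Submodule.mem_annihilator]
      intro x hx
      rw [← hs] at hx
      induction hx using Submodule.span_induction with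
      | mem x hx =>
          obtain ⟨i, hi⟩ : ∃ i, g i = x := ⟨s.equivFin ⟨x, hx⟩, by simp [hg]⟩
          rw [← hi]; exact key i
      | zero => simp
      | add x y _ _ hx hy =>
          simp only [smul_eq_mul] at hx hy
          simp [mul_add, hx, hy]
      | smul c x _ hx =>
          simp only [smul_eq_mul] at hx
          rw [smul_eq_mul, smul_eq_mul, mul_left_comm, hx, mul_zero]
    rw [hann] at haJ
    simpa using haJ

/-- Every module over `T(R[x])` (the total quotient ring of `R[x]`), viewed as an
`R`-module, is a Lucas `R`-module: it is Q-torsion-free, and every `R`-linear map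
from a finitely generated semi-regular ideal into it is given by multiplication by
a fixed element. -/
theorem statement0 (R : Type u) [CommRing R] (M : Type v) [AddCommGroup M]
    [Module (FractionRing (Polynomial R)) M] [Module R M]
    [IsScalarTower R (FractionRing (Polynomial R)) M] :
    (∀ m : M, (∃ I : Ideal R, I.FG ∧ I.IsSemiregular ∧ ∀ a ∈ I, a • m = 0) → m = 0) ∧
    (∀ J : Ideal R, J.FG → J.IsSemiregular → ∀ φ : J →ₗ[R] M,
      ∃ m : M, ∀ a : J, φ a = (a : R) • m) := by
  set T := FractionRing (Polynomial R) with hT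
  have hsmul : ∀ (a : R) (m : M),
      a • m = algebraMap R[X] T (C a) • m := by
    intro a m
    rw [← algebraMap_smul T a m, IsScalarTower.algebraMap_apply R R[X] T, algebraMap_eq]
  constructor
  · rintro m ⟨I, _, hsr, hm⟩
    obtain ⟨n, g, hgI, hf⟩ := hsr.exists_poly
    set f : R[X] := ∑ i : Fin n, C (g i) * X ^ (i : ℕ) with hfdef
    have hu : IsUnit (algebraMap R[X] T f) := IsLocalization.map_units T ⟨f, hf⟩
    obtain ⟨v, hv⟩ : ∃ v : T, v * algebraMap R[X] T f = 1 := by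
      obtain ⟨⟨a, b, _, h2⟩, rfl⟩ := hu
      exact ⟨b, h2⟩
    have h0 : algebraMap R[X] T f • m = 0 := by
      rw [hfdef, map_sum, Finset.sum_smul]
      refine Finset.sum_eq_zero fun i _ => ?_
      rw [map_mul, mul_comm, mul_smul, ← hsmul, hm _ (hgI i), smul_zero]
    calc m = (1 : T) • m := (one_smul T m).symm
      _ = (v * algebraMap R[X] T f) • m := by rw [hv]
      _ = v • (algebraMap R[X] T f • m) := mul_smul _ _ _
      _ = 0 := by rw [h0, smul_zero]
  · intro J _ hsr φ
    obtain ⟨n, g, hgJ, hf⟩ := hsr.exists_poly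
    set f : R[X] := ∑ i : Fin n, C (g i) * X ^ (i : ℕ) with hfdef
    have hu : IsUnit (algebraMap R[X] T f) := IsLocalization.map_units T ⟨f, hf⟩
    obtain ⟨v, hv⟩ : ∃ v : T, v * algebraMap R[X] T f = 1 := by
      obtain ⟨⟨a, b, _, h2⟩, rfl⟩ := hu
      exact ⟨b, h2⟩
    set w : M := ∑ i : Fin n, algebraMap R[X] T (X ^ (i : ℕ)) • φ ⟨g i, hgJ i⟩ with hw
    refine ⟨v • w, fun a => ?_⟩
    have key : algebraMap R[X] T f • φ a = (a : R) • w := by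
      rw [hfdef, map_sum, Finset.sum_smul, hw, Finset.smul_sum]
      refine Finset.sum_congr rfl fun i _ => ?_
      have hlin : (g i) • φ a = (a : R) • φ ⟨g i, hgJ i⟩ := by
        rw [← map_smul, ← map_smul]
        congr 1
        ext
        simp [mul_comm]
      have step : algebraMap R[X] T (C (g i) * X ^ (i : ℕ)) • φ a
          = algebraMap R[X] T (X ^ (i : ℕ)) • ((g i) • φ a) := by
        rw [hsmul (g i), ← mul_smul, ← map_mul, mul_comm]
      rw [step, hlin, hsmul (a : R), hsmul (a : R), smul_comm]
    calc φ a = (1 : T) • φ a := (one_smul T _).symm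
      _ = (v * algebraMap R[X] T f) • φ a := by rw [hv]
      _ = v • (algebraMap R[X] T f • φ a) := mul_smul _ _ _
      _ = v • ((a : R) • w) := by rw [key]
      _ = (a : R) • (v • w) := by
          rw [hsmul, hsmul]
          exact smul_comm _ _ _
end

section
/- For any commutative ring R, the total quotient ring T(R[x]) is a DQ-ring: every finitely generated semi-regular ideal of the ring T(R[x]) (that is, every finitely generated ideal of T(R[x]) containing a finitely generated subideal whose annihilator in T(R[x]) is zero) is equal to T(R[x]) itself. -/
open Polynomial TensorProduct

universe u v

/-!
Write a finitely generated dense ideal `J` of `T(R[x])` as `span s` and clear denominators of `s`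
with one common denominator: the numerators span a finitely generated ideal `I` of `R[x]` with
`I T(R[x]) ≤ J`, and `I` is still dense. Stacking the generators `p₁, …, pₙ` of `I` into the
single polynomial `p₁ + x^(deg p₁ + 1) (p₂ + x^(deg p₂ + 1) (⋯))` gives an element of `I` that is
killed by a constant `a` only if every `pᵢ` is, i.e. only if `a` annihilates `I`, so `a = 0`.
By McCoy's theorem this element is a non-zerodivisor, hence a unit of `T(R[x])` lying in `J`.
-/

open nonZeroDivisors

namespace Polynomial

variable {R : Type*} [CommRing R]

noncomputable def blockSum : List R[X] → R[X]
  | [] => 0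
  | p :: l => p + X ^ (p.natDegree + 1) * blockSum l

theorem blockSum_mem {I : Ideal R[X]} {l : List R[X]} (h : ∀ p ∈ l, p ∈ I) :
    blockSum l ∈ I := by
  induction l with
  | nil => exact I.zero_mem
  | cons p l ih =>
    simp only [List.mem_cons, forall_eq_or_imp] at h
    exact I.add_mem h.1 (I.mul_mem_left _ (ih h.2))

theorem smul_eq_zero_of_smul_blockSum_eq_zero {a : R} {l : List R[X]}
    (h : a • blockSum l = 0) : ∀ p ∈ l, a • p = 0 := by
  induction l with
  | nil => simp
  | cons p l ih =>
    rw [blockSum, smul_add, ← mul_smul_comm] at h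
    have hp : a • p = 0 := by
      ext n
      rcases le_or_gt n p.natDegree with hn | hn
      · have hn' := congrArg (coeff · n) h
        simp only [coeff_add, coeff_zero, coeff_X_pow_mul',
          if_neg (by omega : ¬ p.natDegree + 1 ≤ n), add_zero] at hn'
        simpa using hn'
      · simp [coeff_eq_zero_of_natDegree_lt hn]
    rw [hp, zero_add] at h
    have hl : a • blockSum l = 0 :=
      (monic_X_pow _).mem_nonZeroDivisors.2 _ (by rw [mul_comm]; exact h)
    simpa [hp] using ih hl

theorem exists_mem_nonZeroDivisors_of_fg_of_annihilator_eq_bot {I : Ideal R[X]} (hI : I.FG)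
    (hann : Submodule.annihilator I = ⊥) : ∃ p ∈ I, p ∈ R[X]⁰ := by
  obtain ⟨s, rfl⟩ := hI
  refine ⟨blockSum s.toList,
    blockSum_mem fun p hp => Ideal.subset_span (Finset.mem_toList.1 hp), ?_⟩
  refine Polynomial.mem_nonZeroDivisors_iff.2 fun a ha => C_eq_zero.1 ?_
  have hCa : C a ∈ Submodule.annihilator (Ideal.span (s : Set R[X])) := by
    rw [← Ideal.submodule_span_eq, Submodule.mem_annihilator_span]
    rintro ⟨p, hp⟩
    rw [smul_eq_mul, ← smul_eq_C_mul]
    exact smul_eq_zero_of_smul_blockSum_eq_zero ha p (Finset.mem_toList.2 hp)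
  rwa [hann, Submodule.mem_bot] at hCa

end Polynomial

namespace IsLocalization

open scoped Pointwise

theorem exists_fg_annihilator_eq_bot_map_le {R S : Type*} [CommRing R] [CommRing S]
    [Algebra R S] (M : Submonoid R) [IsLocalization M S] (hM : M ≤ R⁰) {J : Ideal S}
    (hJ : J.FG) (hann : Submodule.annihilator J = ⊥) :
    ∃ I : Ideal R, I.FG ∧ Submodule.annihilator I = ⊥ ∧ I.map (algebraMap R S) ≤ J := by
  classical
  obtain ⟨s, rfl⟩ := hJ
  set b : M := commonDenomOfFinset M s
  have himage := finsetIntegerMultiple_image M s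
  refine ⟨Ideal.span (finsetIntegerMultiple M s), ⟨_, rfl⟩, ?_, ?_⟩
  · refine (Submodule.eq_bot_iff _).2 fun q hq => ?_
    have hqb : algebraMap R S (q * b) ∈ Submodule.annihilator (Ideal.span (s : Set S)) := by
      rw [← Ideal.submodule_span_eq, Submodule.mem_annihilator_span]
      rintro ⟨g, hg⟩
      obtain ⟨f, hf, hfg⟩ :
          algebraMap R S (b : R) * g ∈ algebraMap R S '' finsetIntegerMultiple M s := by
        rw [himage]
        exact ⟨g, hg, Algebra.smul_def _ _⟩
      rw [smul_eq_mul, map_mul, mul_assoc, ← hfg, ← map_mul, ← smul_eq_mul,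
        Submodule.mem_annihilator.1 hq f (Ideal.subset_span hf), map_zero]
    rw [hann, Submodule.mem_bot, ← map_zero (algebraMap R S)] at hqb
    exact (hM b.2).2 q (IsLocalization.injective S hM hqb)
  · rw [Ideal.map_span, himage, Ideal.span_le]
    rintro _ ⟨g, hg, rfl⟩
    exact Submodule.smul_of_tower_mem _ _ (Ideal.subset_span hg)

end IsLocalization

theorem FractionRing.polynomial_eq_top_of_fg_of_annihilator_eq_bot {R : Type*} [CommRing R]
    {J : Ideal (FractionRing R[X])} (hJ : J.FG) (hann : Submodule.annihilator J = ⊥) :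
    J = ⊤ := by
  obtain ⟨I, hIfg, hIann, hIJ⟩ :=
    IsLocalization.exists_fg_annihilator_eq_bot_map_le R[X]⁰ le_rfl hJ hann
  obtain ⟨p, hpI, hp⟩ := exists_mem_nonZeroDivisors_of_fg_of_annihilator_eq_bot hIfg hIann
  exact J.eq_top_of_isUnit_mem (hIJ (Ideal.mem_map_of_mem _ hpI))
    (IsLocalization.map_units (FractionRing R[X]) ⟨p, hp⟩)

theorem statement1_general (R : Type u) [CommRing R]
    (A : Ideal (FractionRing (Polynomial R))) (hsr : A.IsSemiregular) :
    A = ⊤ := by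
  obtain ⟨J, hJA, hJfg, hJann⟩ := hsr
  exact top_le_iff.1 (FractionRing.polynomial_eq_top_of_fg_of_annihilator_eq_bot hJfg hJann ▸ hJA)

/-- For any commutative ring `R`, the total quotient ring `T(R[x])` is a DQ-ring:
every finitely generated semi-regular ideal of `T(R[x])` is the whole ring. -/
theorem statement1 (R : Type u) [CommRing R]
    (A : Ideal (FractionRing (Polynomial R))) (hfg : A.FG) (hsr : A.IsSemiregular) :
    A = ⊤ :=
  statement1_general R A hsr
end

section
/- Let R be a commutative ring and M an R-module. Then M is Q-torsion if and only if M ⊗_R T(R[x]) = 0. -/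
open Polynomial TensorProduct

universe u v

section Aux

variable {R : Type u} [CommRing R] {M : Type v} [AddCommGroup M] [Module R M]

/-- Extraction of the `i`-th coefficient from `R[X] ⊗[R] M`. -/
noncomputable def coeffTensor (i : ℕ) : (Polynomial R) ⊗[R] M →ₗ[R] M :=
  TensorProduct.lift ((LinearMap.lsmul R M).comp (lcoeff R i))

@[simp] lemma coeffTensor_tmul (i : ℕ) (f : Polynomial R) (m : M) :
    coeffTensor i (f ⊗ₜ[R] m) = f.coeff i • m := by
  simp [coeffTensor]

open nonZeroDivisors in
lemma isQTorsion_iff_poly_torsion :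
    IsQTorsion R M ↔
      ∀ n : (Polynomial R) ⊗[R] M, ∃ f ∈ (Polynomial R)⁰, f • n = 0 := by
  constructor
  · intro h n
    induction n using TensorProduct.induction_on with
    | zero => exact ⟨1, one_mem _, smul_zero 1⟩
    | tmul p m =>
      obtain ⟨I, _, ⟨J, hJI, hJfg, hJann⟩, hI⟩ := h m
      obtain ⟨k, a, hspan⟩ := Submodule.fg_iff_exists_fin_generating_family.1 hJfg
      set f : Polynomial R := ∑ i : Fin k, monomial (i : ℕ) (a i) with hf
      have hcoeff : ∀ i : Fin k, f.coeff (i : ℕ) = a i := by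
        intro i
        rw [hf, finset_sum_coeff, Finset.sum_eq_single i]
        · simp
        · intro j _ hji
          rw [coeff_monomial, if_neg (fun h => hji (Fin.val_injective h))]
        · simp
      have hfS : f ∈ (Polynomial R)⁰ := by
        rw [Polynomial.mem_nonZeroDivisors_iff]
        intro r hr
        have hra : ∀ i : Fin k, r • a i = 0 := by
          intro i
          have := congrArg (fun q => q.coeff (i : ℕ)) hr
          simpa [coeff_smul, hcoeff i] using this
        have hr' : r ∈ Submodule.annihilator J := by
          rw [Submodule.mem_annihilator]
          intro x hx
          rw [← hspan] at hx
          induction hx using Submodule.span_induction with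
          | mem x hx => obtain ⟨i, rfl⟩ := hx; exact hra i
          | zero => simp
          | add x y _ _ hx hy => rw [smul_add, hx, hy, add_zero]
          | smul c x _ hx => rw [smul_comm, hx, smul_zero]
        rw [hJann] at hr'
        exact hr'
      refine ⟨f, hfS, ?_⟩
      have hfm : f ⊗ₜ[R] m = 0 := by
        rw [hf, sum_tmul]
        refine Finset.sum_eq_zero fun i _ => ?_
        have h1 : monomial (i : ℕ) (a i) = (a i) • monomial (i : ℕ) (1 : R) := by
          rw [smul_monomial, smul_eq_mul, mul_one]
        rw [h1, smul_tmul, hI (a i) (hJI (hspan ▸ Submodule.subset_span ⟨i, rfl⟩)),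
          tmul_zero]
      have h2 : f • (p ⊗ₜ[R] m) = p • (f ⊗ₜ[R] m) := by
        rw [smul_tmul', smul_tmul', smul_eq_mul, smul_eq_mul, mul_comm]
      rw [h2, hfm, smul_zero]
    | add x y hx hy =>
      obtain ⟨fx, hfx, hfx0⟩ := hx
      obtain ⟨fy, hfy, hfy0⟩ := hy
      refine ⟨fx * fy, mul_mem hfx hfy, ?_⟩
      have h1 : (fx * fy) • x = 0 := by rw [mul_comm, mul_smul, hfx0, smul_zero]
      have h2 : (fx * fy) • y = 0 := by rw [mul_smul, hfy0, smul_zero]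
      rw [smul_add, h1, h2, add_zero]
  · intro h m
    classical
    obtain ⟨f, hf, hfm⟩ := h ((1 : Polynomial R) ⊗ₜ[R] m)
    have hfm' : f ⊗ₜ[R] m = 0 := by
      rw [← hfm, smul_tmul', smul_eq_mul, mul_one]
    have hcoe : ∀ i : ℕ, f.coeff i • m = 0 := by
      intro i
      have := congrArg (coeffTensor i) hfm'
      simpa using this
    set I : Ideal R := Ideal.span ↑(f.support.image f.coeff) with hIdef
    have hIfg : I.FG := Submodule.fg_span (Finset.finite_toSet _)
    refine ⟨I, hIfg, ⟨I, le_refl _, hIfg, ?_⟩, ?_⟩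
    · rw [eq_bot_iff]
      intro r hr
      have hrf : r • f = 0 := by
        ext i
        rw [coeff_smul, coeff_zero]
        by_cases hi : i ∈ f.support
        · exact Submodule.mem_annihilator.1 hr _
            (Ideal.subset_span (Finset.mem_image_of_mem _ hi))
        · rw [Polynomial.notMem_support_iff.1 hi, smul_zero]
      exact Polynomial.mem_nonZeroDivisors_iff.1 hf r hrf
    · intro b hb
      induction hb using Submodule.span_induction with
      | mem x hx =>
        obtain ⟨i, _, rfl⟩ := Finset.mem_image.1 hx
        exact hcoe i
      | zero => simp
      | add x y _ _ hx hy => rw [add_smul, hx, hy, add_zero]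
      | smul c x _ hx => rw [smul_eq_mul, mul_smul, hx, smul_zero]

end Aux

/-- An `R`-module `M` is Q-torsion if and only if `M ⊗_R T(R[x]) = 0`, where
`T(R[x])` is the total quotient ring of the polynomial ring `R[x]`. -/
theorem statement2 (R : Type u) [CommRing R] (M : Type v) [AddCommGroup M] [Module R M] :
    IsQTorsion R M ↔ Subsingleton (M ⊗[R] (FractionRing (Polynomial R))) := by
  let A := Polynomial R
  let K := FractionRing A
  let N := A ⊗[R] M
  let e1 : (M ⊗[R] K) ≃ₗ[R] K ⊗[R] M := TensorProduct.comm R M K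
  let e2 : (K ⊗[A] N) ≃ₗ[K] K ⊗[R] M :=
    TensorProduct.AlgebraTensorModule.cancelBaseChange R A K K M
  have hbc : IsBaseChange K (LocalizedModule.mkLinearMap (nonZeroDivisors A) N) :=
    IsLocalizedModule.isBaseChange (nonZeroDivisors A) K _
  let e3 : (K ⊗[A] N) ≃ₗ[K] LocalizedModule (nonZeroDivisors A) N := hbc.equiv
  have hiff : Subsingleton (M ⊗[R] K) ↔
      Subsingleton (LocalizedModule (nonZeroDivisors A) N) :=
    Equiv.subsingleton_congr (e1.toEquiv.trans (e2.toEquiv.symm.trans e3.toEquiv))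
  rw [hiff, LocalizedModule.subsingleton_iff, isQTorsion_iff_poly_torsion]
end

section
/- Let R be a commutative ring and M an R-module. Then M is τ_q-finitely generated if and only if M ⊗_R T(R[x]) is a finitely generated T(R[x])-module. -/
open Polynomial TensorProduct

universe u v

/-- A module is *τ_q-finitely generated* if it has a finitely generated submodule
with Q-torsion quotient. -/
def IsTauQFG (R : Type u) (M : Type v) [CommRing R] [AddCommGroup M] [Module R M] : Prop :=
  ∃ N : Submodule R M, N.FG ∧ IsQTorsion R (M ⧸ N)

/-! `T(R[x]) ⊗ K` is the localization of `R[x] ⊗ K` at the non-zerodivisors of `R[x]`, so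
`1 ⊗ k` vanishes exactly when `p ⊗ k = 0` for a non-zerodivisor `p`, i.e. when every coefficient
of `p` kills `k`. By McCoy's theorem `p` is a non-zerodivisor iff the ideal generated by its
coefficients is dense, and every finitely generated ideal arises this way; hence `K` is
`Q`-torsion iff `T(R[x]) ⊗ K = 0`. The theorem follows from right exactness of `T(R[x]) ⊗ -` on
`N → M → M/N → 0`, since finitely many generators of `T(R[x]) ⊗ M` come from a finitely
generated `N ⊆ M`. -/

open nonZeroDivisors

section Localization

variable {R A B K : Type*} [CommSemiring R] [CommSemiring A] [CommSemiring B]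
  [Algebra R A] [Algebra A B] [Algebra R B] [IsScalarTower R A B]
  [AddCommMonoid K] [Module R K]

theorem IsLocalization.one_tmul_eq_zero_iff (S : Submonoid A) [IsLocalization S B] (k : K) :
    (1 : B) ⊗ₜ[R] k = 0 ↔ ∃ s ∈ S, (s : A) ⊗ₜ[R] k = 0 := by
  let f : A ⊗[R] K →ₗ[A] B ⊗[R] K :=
    (TensorProduct.AlgebraTensorModule.cancelBaseChange R A A B K).toLinearMap ∘ₗ
      TensorProduct.mk A B (A ⊗[R] K) 1
  have : IsLocalizedModule S f := IsLocalizedModule.of_linearEquiv S _ _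
  have hf : ∀ a : A, f (a ⊗ₜ k) = algebraMap A B a ⊗ₜ k := fun a => by
    simp [f, Algebra.smul_def]
  rw [show (1 : B) ⊗ₜ[R] k = f (1 ⊗ₜ k) by simp [hf], IsLocalizedModule.eq_zero_iff S f]
  simp only [Submonoid.smul_def, smul_tmul', smul_eq_mul, mul_one, Subtype.exists, exists_prop]

end Localization

namespace Polynomial

variable {R K : Type*} [CommSemiring R] [AddCommMonoid K] [Module R K]

theorem tmul_eq_zero_iff_coeff_smul_eq_zero (p : R[X]) (k : K) :
    p ⊗ₜ[R] k = 0 ↔ ∀ j, p.coeff j • k = 0 := by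
  refine ⟨fun h j => ?_, fun h => ?_⟩
  · have := congrArg ((TensorProduct.lid R K).toLinearMap ∘ₗ (lcoeff R j).rTensor K) h
    simpa using this
  · rw [p.as_sum_support, TensorProduct.sum_tmul]
    refine Finset.sum_eq_zero fun j _ => ?_
    rw [← smul_X_eq_monomial, smul_tmul, h j, tmul_zero]

theorem mem_nonZeroDivisors_iff_annihilator_span_coeff (p : R[X]) :
    p ∈ R[X]⁰ ↔ (Ideal.span (Set.range p.coeff)).annihilator = ⊥ := by
  have : ∀ a : R, a • p = 0 ↔ a ∈ (Ideal.span (Set.range p.coeff)).annihilator := by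
    intro a
    simp [← Ideal.submodule_span_eq, Submodule.mem_annihilator_span, Polynomial.ext_iff]
  simp only [Polynomial.mem_nonZeroDivisors_iff, this, Submodule.eq_bot_iff]

theorem exists_span_range_coeff_eq {J : Ideal R} (hJ : J.FG) :
    ∃ p : R[X], Ideal.span (Set.range p.coeff) = J := by
  classical
  obtain ⟨n, v, rfl⟩ := Submodule.fg_iff_exists_fin_generating_family.1 hJ
  refine ⟨ofFn n v, le_antisymm (Ideal.span_le.2 ?_) (Ideal.span_mono ?_)⟩
  · rintro _ ⟨j, rfl⟩
    by_cases hj : j < n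
    · rw [ofFn_coeff_eq_val_of_lt v hj]
      exact Ideal.subset_span (Set.mem_range_self _)
    · simp [not_lt.1 hj]
  · rintro _ ⟨j, rfl⟩
    exact ⟨j, ofFn_coeff_eq_val_of_lt v j.2⟩

end Polynomial

theorem TensorProduct.subsingleton_iff_one_tmul_eq_zero {R B K : Type*} [CommSemiring R]
    [Semiring B] [Algebra R B] [AddCommMonoid K] [Module R K] :
    Subsingleton (B ⊗[R] K) ↔ ∀ k : K, (1 : B) ⊗ₜ[R] k = 0 := by
  refine ⟨fun _ k => Subsingleton.elim _ _, fun h => subsingleton_of_forall_eq 0 fun z => ?_⟩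
  induction z using TensorProduct.induction_on with
  | zero => rfl
  | tmul b k => rw [← mul_one b, ← smul_eq_mul, ← smul_tmul', h, smul_zero]
  | add x y hx hy => rw [hx, hy, add_zero]

theorem Submodule.baseChange_subtype_surjective_iff {R M B : Type*} [CommRing R]
    [AddCommGroup M] [Module R M] [CommRing B] [Algebra R B] (N : Submodule R M) :
    Function.Surjective (N.subtype.baseChange B) ↔ Subsingleton (B ⊗[R] (M ⧸ N)) := by
  have hexact := lTensor_exact B (LinearMap.exact_subtype_mkQ N) N.mkQ_surjective
  rw [LinearMap.baseChange_eq_ltensor]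
  refine ⟨fun h => subsingleton_of_forall_eq 0 fun z => ?_,
    fun _ y => (hexact y).1 (Subsingleton.elim _ _)⟩
  obtain ⟨y, rfl⟩ := LinearMap.lTensor_surjective B N.mkQ_surjective z
  exact (hexact y).2 (h y)

section QTorsion

variable {R K : Type*} [CommRing R] [AddCommGroup K] [Module R K]

theorem exists_fg_isSemiregular_smul_eq_zero_iff (k : K) :
    (∃ I : Ideal R, I.FG ∧ I.IsSemiregular ∧ ∀ a ∈ I, a • k = 0) ↔
      ∃ p ∈ R[X]⁰, p ⊗ₜ[R] k = 0 := by
  simp only [Polynomial.tmul_eq_zero_iff_coeff_smul_eq_zero]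
  constructor
  · rintro ⟨I, -, ⟨J, hJI, hJ, hJann⟩, hIk⟩
    obtain ⟨p, rfl⟩ := Polynomial.exists_span_range_coeff_eq hJ
    exact ⟨p, (Polynomial.mem_nonZeroDivisors_iff_annihilator_span_coeff p).2 hJann,
      fun j => hIk _ (hJI (Ideal.subset_span (Set.mem_range_self j)))⟩
  · rintro ⟨p, hp, hpk⟩
    have hfg : (Ideal.span (Set.range p.coeff)).FG := Submodule.fg_span p.finite_range_coeff
    have hann : Ideal.span (Set.range p.coeff) ≤ (R ∙ k).annihilator := by
      rw [Ideal.span_le]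
      rintro _ ⟨j, rfl⟩
      exact (Submodule.mem_annihilator_span_singleton k _).2 (hpk j)
    refine ⟨_, hfg, ⟨_, le_rfl, hfg, (p.mem_nonZeroDivisors_iff_annihilator_span_coeff).1 hp⟩,
      fun a ha => (Submodule.mem_annihilator_span_singleton k a).1 (hann ha)⟩

theorem isQTorsion_iff_subsingleton_tensor :
    IsQTorsion R K ↔ Subsingleton (FractionRing R[X] ⊗[R] K) := by
  simp only [IsQTorsion, TensorProduct.subsingleton_iff_one_tmul_eq_zero,
    IsLocalization.one_tmul_eq_zero_iff R[X]⁰, exists_fg_isSemiregular_smul_eq_zero_iff]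

end QTorsion

/-- An `R`-module `M` is τ_q-finitely generated if and only if `M ⊗_R T(R[x])` is a
finitely generated `T(R[x])`-module. -/
theorem statement3 (R : Type u) [CommRing R] (M : Type u) [AddCommGroup M] [Module R M] :
    IsTauQFG R M ↔
      Module.Finite (FractionRing (Polynomial R)) ((FractionRing (Polynomial R)) ⊗[R] M) := by
  constructor
  · rintro ⟨N, hN, hQ⟩
    have : Module.Finite R N := Module.Finite.iff_fg.2 hN
    have := isQTorsion_iff_subsingleton_tensor.1 hQ
    exact Module.Finite.of_surjective _ ((N.baseChange_subtype_surjective_iff).2 this)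
  · intro hfin
    obtain ⟨G, hG⟩ := hfin.fg_top
    obtain ⟨N, hN, hGN⟩ := TensorProduct.exists_finite_submodule_right_of_setFinite
      (G : Set (FractionRing R[X] ⊗[R] M)) G.finite_toSet
    refine ⟨N, Module.Finite.iff_fg.1 hN, isQTorsion_iff_subsingleton_tensor.2
      ((N.baseChange_subtype_surjective_iff).1 ?_)⟩
    rw [← LinearMap.range_eq_top, eq_top_iff, ← hG, Submodule.span_le, LinearMap.coe_range,
      LinearMap.baseChange_eq_ltensor]
    simpa only [LinearMap.coe_range] using hGN
end

section
/- Let R be a commutative ring. (1) If N is a submodule of an R-module M such that both N and M/N are τ_q-finitely generated, then M is τ_q-finitely generated. (2) Every quotient module of a τ_q-finitely generated R-module is τ_q-finitely generated. -/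
open Polynomial TensorProduct

universe u v

section Helpers

variable {R : Type u} [CommRing R]

lemma semiregular_top : (⊤ : Ideal R).IsSemiregular := by
  refine ⟨⊤, le_rfl, ⟨{1}, by simp⟩, ?_⟩
  rw [eq_bot_iff]
  intro r hr
  have := Submodule.mem_annihilator.mp hr 1 trivial
  simpa using this

lemma semiregular_mul {I J : Ideal R} (hI : I.IsSemiregular) (hJ : J.IsSemiregular) :
    (I * J).IsSemiregular := by
  obtain ⟨I₁, hI₁le, hI₁fg, hI₁ann⟩ := hI
  obtain ⟨J₁, hJ₁le, hJ₁fg, hJ₁ann⟩ := hJ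
  refine ⟨I₁ * J₁, Ideal.mul_mono hI₁le hJ₁le, Submodule.FG.mul hI₁fg hJ₁fg, ?_⟩
  rw [eq_bot_iff]
  intro r hr
  have key : r ∈ Submodule.annihilator J₁ := by
    rw [Submodule.mem_annihilator]
    intro j hj
    have : r * j ∈ Submodule.annihilator I₁ := by
      rw [Submodule.mem_annihilator]
      intro i hi
      have := Submodule.mem_annihilator.mp hr (i * j) (Ideal.mul_mem_mul hi hj)
      simp only [smul_eq_mul] at this ⊢
      calc r * j * i = r * (i * j) := by ring
        _ = 0 := this
    rw [hI₁ann] at this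
    simpa using this
  rw [hJ₁ann] at key
  exact key

lemma prod_fg_semiregular {ι : Type*} (s : Finset ι) (f : ι → Ideal R)
    (h : ∀ i ∈ s, (f i).FG ∧ (f i).IsSemiregular) :
    (∏ i ∈ s, f i).FG ∧ (∏ i ∈ s, f i).IsSemiregular := by
  classical
  induction s using Finset.cons_induction with
  | empty =>
    simp only [Finset.prod_empty, Ideal.one_eq_top]
    exact ⟨⟨{1}, by simp⟩, semiregular_top⟩
  | cons a s ha ih =>
    rw [Finset.prod_cons]
    have h1 := h a (Finset.mem_cons_self a s)
    have h2 := ih (fun i hi => h i (Finset.mem_cons_of_mem hi))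
    exact ⟨Submodule.FG.mul h1.1 h2.1, semiregular_mul h1.2 h2.2⟩

lemma isQTorsion_of_surjective {M : Type v} {M' : Type*} [AddCommGroup M] [Module R M]
    [AddCommGroup M'] [Module R M'] (f : M →ₗ[R] M') (hf : Function.Surjective f)
    (h : IsQTorsion R M) : IsQTorsion R M' := by
  intro n
  obtain ⟨m, rfl⟩ := hf n
  obtain ⟨I, h1, h2, h3⟩ := h m
  exact ⟨I, h1, h2, fun a ha => by rw [← map_smul, h3 a ha, map_zero]⟩

lemma exists_kill {M : Type v} [AddCommGroup M] [Module R M] (m : M) (T : Finset R)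
    (hsr : (Ideal.span (T : Set R)).IsSemiregular)
    (h : ∀ a ∈ T, ∃ J : Ideal R, J.FG ∧ J.IsSemiregular ∧ ∀ c ∈ J, (c * a) • m = 0) :
    ∃ K : Ideal R, K.FG ∧ K.IsSemiregular ∧ ∀ c ∈ K, c • m = 0 := by
  classical
  choose J hfg hsr' hk using h
  have hprod := prod_fg_semiregular T.attach (fun a => J a a.2)
    (fun a _ => ⟨hfg a a.2, hsr' a a.2⟩)
  refine ⟨Ideal.span (T : Set R) * ∏ a ∈ T.attach, J a a.2,
    Submodule.FG.mul (Submodule.fg_span T.finite_toSet) hprod.1, semiregular_mul hsr hprod.2, ?_⟩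
  have hmem : Ideal.span (T : Set R) * ∏ a ∈ T.attach, J a a.2 ≤
      (Submodule.span R {m}).annihilator := by
    apply Submodule.mul_le.mpr
    intro i hi c hc
    rw [Submodule.mem_annihilator_span_singleton]
    induction hi using Submodule.span_induction with
    | mem x hx =>
      have hJle : (∏ a ∈ T.attach, J a a.2) ≤ J x hx :=
        Ideal.prod_le_inf.trans (Finset.inf_le (Finset.mem_attach _ ⟨x, hx⟩))
      rw [mul_comm]
      exact hk x hx c (hJle hc)
    | zero => rw [zero_mul, zero_smul]
    | add x y _ _ hx hy => rw [add_mul, add_smul, hx, hy, add_zero]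
    | smul r x _ hx =>
      rw [smul_eq_mul, mul_assoc, mul_smul, hx, smul_zero]
  exact fun c hc => (Submodule.mem_annihilator_span_singleton m c).mp (hmem hc)

end Helpers

/-- (1) The class of τ_q-finitely generated modules is closed under extensions:
if a submodule `N ⊆ M` and the quotient `M/N` are τ_q-finitely generated, so is `M`.
(2) Every quotient module of a τ_q-finitely generated module is τ_q-finitely
generated. -/
theorem statement5 (R : Type u) [CommRing R] (M : Type v) [AddCommGroup M] [Module R M] :
    (∀ N : Submodule R M, IsTauQFG R N → IsTauQFG R (M ⧸ N) → IsTauQFG R M) ∧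
    (∀ N : Submodule R M, IsTauQFG R M → IsTauQFG R (M ⧸ N)) := by
  constructor
  · rintro N ⟨A, hAfg, hAtor⟩ ⟨Bb, hBfg, hBtor⟩
    classical
    -- lift Bb to a finitely generated submodule B of M
    obtain ⟨Tb, hTb⟩ := hBfg
    choose g hg using N.mkQ_surjective
    set B : Submodule R M := Submodule.span R (g '' ↑Tb) with hB
    have hBfg' : B.FG := Submodule.fg_span (Tb.finite_toSet.image g)
    have hBmap : B.map N.mkQ = Bb := by
      rw [hB, Submodule.map_span, ← Set.image_comp]
      have : (N.mkQ ∘ g) = id := funext hg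
      rw [this, Set.image_id, hTb]
    set A' : Submodule R M := A.map N.subtype with hA'
    have hA'N : A' ≤ N := by
      rintro x ⟨y, _, rfl⟩
      exact y.2
    refine ⟨A' ⊔ B, (hAfg.map _).sup hBfg', ?_⟩
    set P : Submodule R M := A' ⊔ B with hP
    intro x
    obtain ⟨m, rfl⟩ := P.mkQ_surjective x
    obtain ⟨I, hIfg, hIsr, hIk⟩ := hBtor (Bb.mkQ (N.mkQ m))
    obtain ⟨T, hT⟩ := hIfg
    apply exists_kill _ T (hT ▸ hIsr)
    intro a ha
    have h1 : a • (Bb.mkQ (N.mkQ m)) = 0 := hIk a (hT ▸ Ideal.subset_span ha)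
    rw [← map_smul, Submodule.mkQ_apply, Submodule.Quotient.mk_eq_zero, ← map_smul,
      ← hBmap] at h1
    obtain ⟨b, hbB, hb⟩ := h1
    have hn : a • m - b ∈ N := by
      rw [Submodule.mkQ_apply, Submodule.mkQ_apply, Submodule.Quotient.eq] at hb
      simpa using neg_mem hb
    obtain ⟨J, hJfg, hJsr, hJk⟩ := hAtor (A.mkQ (⟨a • m - b, hn⟩ : N))
    refine ⟨J, hJfg, hJsr, fun c hc => ?_⟩
    have h2 : c • (⟨a • m - b, hn⟩ : N) ∈ A := by
      have := hJk c hc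
      rwa [← map_smul, Submodule.mkQ_apply, Submodule.Quotient.mk_eq_zero] at this
    have h3 : c • (a • m - b) ∈ A' := ⟨_, h2, rfl⟩
    have h4 : (c * a) • m ∈ P := by
      have heq : (c * a) • m = c • (a • m - b) + c • b := by
        rw [smul_sub, sub_add_cancel, mul_smul]
      rw [heq]
      exact add_mem (Submodule.mem_sup_left h3)
        (Submodule.mem_sup_right (Submodule.smul_mem _ _ hbB))
    rw [← map_smul, Submodule.mkQ_apply, Submodule.Quotient.mk_eq_zero]
    exact h4
  · rintro N ⟨N₀, hfg, htor⟩
    refine ⟨N₀.map N.mkQ, hfg.map _, ?_⟩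
    have hker : N₀ ≤ LinearMap.ker ((N₀.map N.mkQ).mkQ ∘ₗ N.mkQ) := by
      intro x hx
      rw [LinearMap.mem_ker, LinearMap.comp_apply, Submodule.mkQ_apply,
        Submodule.mkQ_apply, Submodule.Quotient.mk_eq_zero]
      exact ⟨x, hx, rfl⟩
    refine isQTorsion_of_surjective (N₀.liftQ _ hker) ?_ htor
    intro y
    obtain ⟨x, rfl⟩ := (N₀.map N.mkQ).mkQ_surjective y
    obtain ⟨z, rfl⟩ := N.mkQ_surjective x
    exact ⟨N₀.mkQ z, by rw [Submodule.mkQ_apply, Submodule.liftQ_apply]; rfl⟩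
end

section
/- Let R be a commutative ring and let f : M → N and g : N → L be R-linear maps such that the modules ker f, L/im g, (im f + ker g)/im f, and (im f + ker g)/ker g are all Q-torsion (i.e., 0 → M → N → L → 0 is a τ_q-exact sequence). If N is τ_q-finitely presented, then L is τ_q-finitely presented if and only if M is τ_q-finitely generated. -/
/-!
Write `F.qSat` for the submodule of elements that lie in `F` up to `Q`-torsion. Since ideals in `Q`
are finitely generated and `Q` is closed under products, a finitely generated submodule of
`F.qSat` is pushed into `F` by a single ideal of `Q`; hence `qSat` is idempotent. The four
τ_q-exactness hypotheses say that `range f`, `range f ⊔ ker g` and `ker g` have the same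
saturation, and being τ_q-finitely generated only depends on the saturation; it is also preserved
under pullback along a map with `Q`-torsion kernel. So, for `ψ : P → N` witnessing that `N` is
τ_q-finitely presented, both sides of the equivalence say that `ker (g ∘ ψ)` is τ_q-finitely
generated. For `L` this is a Schanuel-type argument: given `h : P₁ → L` and `χ : P₂ → L` from
finitely generated projective modules whose cokernels are `Q`-torsion, there are `I, Λ ∈ Q` and
lifts `χ ∘ σ = a • h`, `h ∘ σ' = b • χ` for `a ∈ I`, `b ∈ Λ`; then on `ker h` we have
`a b x = (a b - σ' σ) x + σ' (σ x)` with `σ x ∈ ker χ`, so `ker h` is saturated by the finitely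
generated images of `a b - σ' σ` and of `σ'` on a finitely generated core of `ker χ`.
-/

open Polynomial TensorProduct

universe u v

/-- A module is *τ_q-finitely presented* if it receives a linear map from a finitely
presented module with Q-torsion kernel and cokernel. -/
def IsTauQFP (R : Type u) (M : Type v) [CommRing R] [AddCommGroup M] [Module R M] : Prop :=
  ∃ (N : Type v) (_ : AddCommGroup N) (_ : Module R N) (f : N →ₗ[R] M),
    Module.FinitePresentation R N ∧ IsQTorsion R (LinearMap.ker f) ∧
      IsQTorsion R (M ⧸ LinearMap.range f)

namespace Ideal

variable {R : Type*} [CommRing R]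

/-- Membership in the set `Q` of the paper. -/
def IsFGSemiregular (I : Ideal R) : Prop := I.FG ∧ I.IsSemiregular

theorem isFGSemiregular_top : (⊤ : Ideal R).IsFGSemiregular := by
  have htop : (⊤ : Ideal R).FG := ⟨{1}, by simp⟩
  refine ⟨htop, ⊤, le_rfl, htop, eq_bot_iff.mpr fun a ha => ?_⟩
  simpa using Submodule.mem_annihilator.mp ha 1 Submodule.mem_top

theorem annihilator_mul_eq_bot {I J : Ideal R} (hI : Submodule.annihilator I = ⊥)
    (hJ : Submodule.annihilator J = ⊥) : Submodule.annihilator (I * J) = ⊥ := by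
  refine eq_bot_iff.mpr fun a ha => ?_
  rw [← hI, Submodule.mem_annihilator]
  intro x hx
  rw [← Submodule.mem_bot R, ← hJ, Submodule.mem_annihilator]
  intro y hy
  simpa [mul_assoc] using Submodule.mem_annihilator.mp ha (x * y) (mul_mem_mul hx hy)

theorem IsFGSemiregular.mul {I J : Ideal R} (hI : I.IsFGSemiregular) (hJ : J.IsFGSemiregular) :
    (I * J).IsFGSemiregular := by
  obtain ⟨hIfg, I', hI'I, hI'fg, hI'⟩ := hI
  obtain ⟨hJfg, J', hJ'J, hJ'fg, hJ'⟩ := hJ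
  exact ⟨hIfg.mul hJfg, I' * J', mul_mono hI'I hJ'J, hI'fg.mul hJ'fg,
    annihilator_mul_eq_bot hI' hJ'⟩

end Ideal

namespace Submodule

variable {R : Type*} [CommRing R] {X Y : Type*} [AddCommGroup X] [Module R X]
  [AddCommGroup Y] [Module R Y]

/-- `x ∈ F.qSat` iff the image of `x` in `X ⧸ F` is `Q`-torsion. -/
def qSat (F : Submodule R X) : Submodule R X where
  carrier := {x | ∃ I : Ideal R, I.IsFGSemiregular ∧ ∀ a ∈ I, a • x ∈ F}
  add_mem' := by
    rintro x y ⟨I, hI, hIx⟩ ⟨J, hJ, hJy⟩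
    refine ⟨I * J, hI.mul hJ, fun a ha => ?_⟩
    rw [smul_add]
    exact add_mem (hIx a (Ideal.mul_le_left ha)) (hJy a (Ideal.mul_le_right ha))
  zero_mem' := ⟨⊤, Ideal.isFGSemiregular_top, fun a _ => by simp⟩
  smul_mem' := by
    rintro r x ⟨I, hI, hIx⟩
    exact ⟨I, hI, fun a ha => by rw [smul_comm]; exact F.smul_mem r (hIx a ha)⟩

variable {F G S W K : Submodule R X}

theorem mem_qSat {x : X} :
    x ∈ F.qSat ↔ ∃ I : Ideal R, I.IsFGSemiregular ∧ ∀ a ∈ I, a • x ∈ F :=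
  Iff.rfl

theorem le_qSat : F ≤ F.qSat :=
  fun _ hx => ⟨⊤, Ideal.isFGSemiregular_top, fun a _ => F.smul_mem a hx⟩

theorem qSat_mono (h : F ≤ G) : F.qSat ≤ G.qSat :=
  fun _ ⟨I, hI, hIx⟩ => ⟨I, hI, fun a ha => h (hIx a ha)⟩

theorem FG.exists_smul_le_of_le_qSat (hS : S.FG) (h : S ≤ F.qSat) :
    ∃ I : Ideal R, I.IsFGSemiregular ∧ I • S ≤ F := by
  induction S, hS using Submodule.fg_induction with
  | singleton x =>
    obtain ⟨I, hI, hIx⟩ := h (mem_span_singleton_self x)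
    refine ⟨I, hI, smul_le.mpr fun a ha y hy => ?_⟩
    obtain ⟨r, rfl⟩ := mem_span_singleton.mp hy
    rw [smul_comm]
    exact F.smul_mem r (hIx a ha)
  | sup S₁ S₂ _ _ ih₁ ih₂ =>
    obtain ⟨I, hI, hIS⟩ := ih₁ (le_sup_left.trans h)
    obtain ⟨J, hJ, hJS⟩ := ih₂ (le_sup_right.trans h)
    refine ⟨I * J, hI.mul hJ, ?_⟩
    rw [smul_sup]
    exact sup_le ((smul_mono_left Ideal.mul_le_left).trans hIS)
      ((smul_mono_left Ideal.mul_le_right).trans hJS)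

@[simp]
theorem qSat_qSat : F.qSat.qSat = F.qSat := by
  refine le_antisymm (fun x ⟨I, hI, hIx⟩ => ?_) le_qSat
  obtain ⟨J, hJ, hJI⟩ :=
    (Submodule.FG.map (LinearMap.toSpanSingleton R X x) hI.1).exists_smul_le_of_le_qSat
    (map_le_iff_le_comap.mpr fun a ha => hIx a ha)
  refine ⟨J * I, hJ.mul hI, fun a ha => ?_⟩
  refine Submodule.mul_induction_on (C := fun a => a • x ∈ F) ha (fun b hb c hc => ?_)
    fun b c hb hc => by simpa only [add_smul] using add_mem hb hc
  rw [mul_smul]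
  exact hJI (smul_mem_smul hb ⟨c, hc, rfl⟩)

theorem qSat_inf : (F ⊓ G).qSat = F.qSat ⊓ G.qSat := by
  refine le_antisymm (le_inf (qSat_mono inf_le_left) (qSat_mono inf_le_right)) ?_
  rintro x ⟨⟨I, hI, hIx⟩, ⟨J, hJ, hJx⟩⟩
  exact ⟨I * J, hI.mul hJ, fun a ha =>
    ⟨hIx a (Ideal.mul_le_left ha), hJx a (Ideal.mul_le_right ha)⟩⟩

theorem map_qSat_le (φ : X →ₗ[R] Y) : F.qSat.map φ ≤ (F.map φ).qSat := by
  rintro _ ⟨x, ⟨I, hI, hIx⟩, rfl⟩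
  exact ⟨I, hI, fun a ha => map_smul φ a x ▸ mem_map_of_mem (hIx a ha)⟩

theorem comap_qSat (φ : X →ₗ[R] Y) (F : Submodule R Y) :
    F.qSat.comap φ = (F.comap φ).qSat := by
  ext x
  simp only [mem_comap, mem_qSat, map_smul]

theorem _root_.isQTorsion_iff_qSat_bot_eq_top :
    IsQTorsion R X ↔ (⊥ : Submodule R X).qSat = ⊤ := by
  simp [IsQTorsion, eq_top_iff', mem_qSat, Ideal.IsFGSemiregular, and_assoc]

theorem _root_.isQTorsion_quotient_iff : IsQTorsion R (X ⧸ F) ↔ F.qSat = ⊤ := by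
  rw [isQTorsion_iff_qSat_bot_eq_top, ← (comap_injective_of_surjective F.mkQ_surjective).eq_iff,
    comap_qSat, comap_bot, ker_mkQ, comap_top]

theorem _root_.isQTorsion_submodule_iff : IsQTorsion R S ↔ S ≤ (⊥ : Submodule R X).qSat := by
  rw [isQTorsion_iff_qSat_bot_eq_top, ← comap_subtype_eq_top, comap_qSat, comap_bot, ker_subtype]

theorem _root_.isQTorsion_subquotient_iff :
    IsQTorsion R (W ⧸ F.comap W.subtype) ↔ W ≤ F.qSat := by
  rw [isQTorsion_quotient_iff, ← comap_qSat, comap_subtype_eq_top]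

/-- The submodule version of `IsTauQFG`. -/
def IsQFG (S : Submodule R X) : Prop := ∃ F ≤ S, F.FG ∧ S ≤ F.qSat

theorem isQFG_top_iff {M : Type v} [AddCommGroup M] [Module R M] :
    (⊤ : Submodule R M).IsQFG ↔ IsTauQFG R M :=
  ⟨fun ⟨F, _, hF, h⟩ => ⟨F, hF, isQTorsion_quotient_iff.mpr (eq_top_iff.mpr h)⟩,
    fun ⟨F, hF, h⟩ => ⟨F, le_top, hF, (isQTorsion_quotient_iff.mp h).ge⟩⟩

theorem IsQFG.map (φ : X →ₗ[R] Y) (h : S.IsQFG) : (S.map φ).IsQFG := by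
  obtain ⟨F, hFS, hF, hSF⟩ := h
  exact ⟨F.map φ, map_mono hFS, hF.map φ, (map_mono hSF).trans (map_qSat_le φ)⟩

theorem isQFG_iff_of_le_qSat (hSW : S ≤ W) (hWS : W ≤ S.qSat) : S.IsQFG ↔ W.IsQFG := by
  constructor
  · rintro ⟨F, hFS, hF, hSF⟩
    exact ⟨F, hFS.trans hSW, hF, hWS.trans (qSat_qSat (F := F) ▸ qSat_mono hSF)⟩
  · rintro ⟨K, hKW, hK, hWK⟩
    obtain ⟨I, hI, hIK⟩ := hK.exists_smul_le_of_le_qSat (hKW.trans hWS)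
    have hK_le : K ≤ (I • K).qSat := fun x hx => ⟨I, hI, fun a ha => smul_mem_smul ha hx⟩
    exact ⟨I • K, hIK, Submodule.FG.smul hI.1 hK,
      hSW.trans (hWK.trans (qSat_qSat (F := I • K) ▸ qSat_mono hK_le))⟩

theorem FG.exists_fg_map_eq {φ : X →ₗ[R] Y} {F : Submodule R Y} (hF : F.FG)
    (h : F ≤ LinearMap.range φ) : ∃ F' : Submodule R X, F'.FG ∧ F'.map φ = F := by
  induction F, hF using Submodule.fg_induction with
  | singleton y =>
    obtain ⟨x, rfl⟩ := h (mem_span_singleton_self y)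
    exact ⟨R ∙ x, fg_span_singleton x, by rw [map_span, Set.image_singleton]⟩
  | sup F₁ F₂ _ _ ih₁ ih₂ =>
    obtain ⟨F₁', hF₁', rfl⟩ := ih₁ (le_sup_left.trans h)
    obtain ⟨F₂', hF₂', rfl⟩ := ih₂ (le_sup_right.trans h)
    exact ⟨F₁' ⊔ F₂', hF₁'.sup hF₂', map_sup F₁' F₂' φ⟩

theorem isQFG_comap_iff {φ : X →ₗ[R] Y}
    (hker : LinearMap.ker φ ≤ (⊥ : Submodule R X).qSat)
    {S : Submodule R Y} (hS : S ≤ LinearMap.range φ) : (S.comap φ).IsQFG ↔ S.IsQFG := by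
  refine ⟨fun h => map_comap_eq_self hS ▸ h.map φ, ?_⟩
  rintro ⟨F, hFS, hF, hSF⟩
  obtain ⟨F', hF', rfl⟩ := hF.exists_fg_map_eq (hFS.trans hS)
  refine ⟨F', map_le_iff_le_comap.mp hFS, hF', ?_⟩
  have hker_le : F' ⊔ LinearMap.ker φ ≤ F'.qSat :=
    sup_le le_qSat (hker.trans (qSat_mono bot_le))
  calc S.comap φ ≤ (F'.map φ).qSat.comap φ := comap_mono hSF
    _ = (F' ⊔ LinearMap.ker φ).qSat := by rw [comap_qSat, comap_map_eq]
    _ ≤ F'.qSat := qSat_qSat (F := F') ▸ qSat_mono hker_le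

theorem isQFG_of_forall_smul_mem_qSat (s : Finset R)
    (hs : (Ideal.span (s : Set R)).IsFGSemiregular)
    (h : ∀ c ∈ s, ∃ G ≤ K, G.FG ∧ ∀ x ∈ K, c • x ∈ G.qSat) : K.IsQFG := by
  choose! G hGK hG hKG using h
  refine ⟨s.sup G, Finset.sup_le hGK, fg_finset_sup s G hG, fun x hx => ?_⟩
  have hspan : Ideal.span (s : Set R) ≤ (s.sup G).qSat.colon {x} :=
    Ideal.span_le.mpr fun c hc =>
      mem_colon_singleton.mpr (qSat_mono (Finset.le_sup hc) (hKG c hc x hx))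
  exact qSat_qSat (F := s.sup G) ▸ ⟨_, hs, fun a ha => mem_colon_singleton.mp (hspan ha)⟩

end Submodule

open LinearMap Submodule Pointwise

section Schanuel

variable {R : Type*} [CommRing R] {P₁ P₂ L : Type*} [AddCommGroup P₁] [Module R P₁]
  [AddCommGroup P₂] [Module R P₂] [AddCommGroup L] [Module R L]

theorem exists_comp_eq_smul_of_smul_range_le [Module.Projective R P₁] (h : P₁ →ₗ[R] L)
    (χ : P₂ →ₗ[R] L) {I : Ideal R} (hI : I • range h ≤ range χ) :
    ∃ σ : R → P₁ →ₗ[R] P₂, ∀ a ∈ I, χ ∘ₗ σ a = a • h := by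
  have hlift : ∀ a ∈ I, ∃ σ : P₁ →ₗ[R] P₂, χ ∘ₗ σ = a • h := by
    intro a ha
    obtain ⟨σ, hσ⟩ := Module.projective_lifting_property χ.rangeRestrict
      ((a • h).codRestrict (range χ) fun v => hI (smul_mem_smul ha (mem_range_self h v)))
      χ.surjective_rangeRestrict
    exact ⟨σ, LinearMap.ext fun v => congrArg Subtype.val (LinearMap.congr_fun hσ v)⟩
  choose! σ hσ using hlift
  exact ⟨σ, hσ⟩

theorem exists_fg_le_ker_smul_mem_qSat [Module.Finite R P₁] {h : P₁ →ₗ[R] L}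
    {χ : P₂ →ₗ[R] L} {F : Submodule R P₂} (hFχ : F ≤ ker χ) (hF : F.FG)
    (hχF : ker χ ≤ F.qSat) {a b : R} {σ : P₁ →ₗ[R] P₂} {σ' : P₂ →ₗ[R] P₁}
    (hσ : χ ∘ₗ σ = a • h) (hσ' : h ∘ₗ σ' = b • χ) :
    ∃ G ≤ ker h, G.FG ∧ ∀ x ∈ ker h, (a * b) • x ∈ G.qSat := by
  set θ : P₁ →ₗ[R] P₁ := (a * b) • LinearMap.id - σ' ∘ₗ σ
  have hhσ' : ∀ y, h (σ' y) = b • χ y := fun y => LinearMap.congr_fun hσ' y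
  have hχσ : ∀ x, χ (σ x) = a • h x := fun x => LinearMap.congr_fun hσ x
  have hθ : h ∘ₗ θ = 0 := LinearMap.ext fun x => by
    simp [θ, hhσ', hχσ, smul_smul, mul_comm]
  have hσ'F : F.map σ' ≤ ker h := by
    rintro _ ⟨y, hy, rfl⟩
    simp [mem_ker, hhσ', mem_ker.mp (hFχ hy)]
  refine ⟨range θ ⊔ F.map σ', sup_le (range_le_ker_iff.mpr hθ) hσ'F,
    (fg_range θ).sup (hF.map σ'), fun x hx => ?_⟩
  have hσx : σ x ∈ ker χ := by simp [mem_ker, hχσ, mem_ker.mp hx]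
  have hsplit : (a * b) • x = θ x + σ' (σ x) := by simp [θ]
  rw [hsplit]
  exact add_mem (le_qSat (mem_sup_left (mem_range_self θ x)))
    (qSat_mono le_sup_right (map_qSat_le σ' (mem_map_of_mem (hχF hσx))))

theorem isQFG_ker_of_projective [Module.Projective R P₁] [Module.Finite R P₁]
    [Module.Projective R P₂] [Module.Finite R P₂] (h : P₁ →ₗ[R] L) (χ : P₂ →ₗ[R] L)
    (hχ : (ker χ).IsQFG) (hrχ : (range χ).qSat = ⊤) (hrh : (range h).qSat = ⊤) :
    (ker h).IsQFG := by
  classical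
  obtain ⟨F, hFχ, hF, hχF⟩ := hχ
  obtain ⟨I, hI, hIh⟩ := (fg_range h).exists_smul_le_of_le_qSat (hrχ ▸ le_top)
  obtain ⟨Λ, hΛ, hΛχ⟩ := (fg_range χ).exists_smul_le_of_le_qSat (hrh ▸ le_top)
  obtain ⟨σ, hσ⟩ := exists_comp_eq_smul_of_smul_range_le h χ hIh
  obtain ⟨σ', hσ'⟩ := exists_comp_eq_smul_of_smul_range_le χ h hΛχ
  obtain ⟨s, rfl⟩ := hI.1
  obtain ⟨s', rfl⟩ := hΛ.1
  refine isQFG_of_forall_smul_mem_qSat (s * s') ?_ fun c hc => ?_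
  · rw [Finset.coe_mul, ← Ideal.span_mul_span']
    exact hI.mul hΛ
  · obtain ⟨a, ha, b, hb, rfl⟩ := Finset.mem_mul.mp hc
    exact exists_fg_le_ker_smul_mem_qSat hFχ hF hχF (hσ a (Ideal.subset_span ha))
      (hσ' b (Ideal.subset_span hb))

end Schanuel

theorem isTauQFP_iff_isQFG_ker {R : Type*} [CommRing R] {P L : Type v} [AddCommGroup P]
    [Module R P] [AddCommGroup L] [Module R L] [Module.FinitePresentation R P]
    (φ : P →ₗ[R] L) (hφ : (range φ).qSat = ⊤) : IsTauQFP R L ↔ (ker φ).IsQFG := by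
  constructor
  · rintro ⟨Q, _, _, χ, _, hkerχ, hcokχ⟩
    obtain ⟨n, π, hπ⟩ := Module.Finite.exists_fin' R P
    obtain ⟨k, π', hπ'⟩ := Module.Finite.exists_fin' R Q
    have hχπ' : (ker (χ ∘ₗ π')).IsQFG := by
      refine ⟨ker π', ker_le_ker_comp π' χ, Module.FinitePresentation.fg_ker π' hπ', ?_⟩
      calc ker (χ ∘ₗ π') ≤ (⊥ : Submodule R Q).qSat.comap π' :=
            ker_comp π' χ ▸ comap_mono (isQTorsion_submodule_iff.mp hkerχ)
        _ = (ker π').qSat := by rw [comap_qSat, comap_bot]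
    have hker := isQFG_ker_of_projective (φ ∘ₗ π) (χ ∘ₗ π') hχπ'
      (by rw [range_comp_of_range_eq_top _ (range_eq_top.mpr hπ')]
          exact isQTorsion_quotient_iff.mp hcokχ)
      (by rwa [range_comp_of_range_eq_top _ (range_eq_top.mpr hπ)])
    simpa only [ker_comp, map_comap_eq_of_surjective hπ] using hker.map π
  · rintro ⟨T, hTφ, hT, hφT⟩
    have hfp : Module.FinitePresentation R (P ⧸ T) :=
      Module.finitePresentation_of_surjective T.mkQ T.mkQ_surjective (by rwa [ker_mkQ])
    refine ⟨P ⧸ T, inferInstance, inferInstance, T.liftQ φ hTφ, hfp, ?_, ?_⟩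
    · rw [isQTorsion_submodule_iff, ker_liftQ]
      calc (ker φ).map T.mkQ ≤ T.qSat.map T.mkQ := map_mono hφT
        _ ≤ (T.map T.mkQ).qSat := map_qSat_le _
        _ = (⊥ : Submodule R (P ⧸ T)).qSat := by rw [mkQ_map_self]
    · rwa [isQTorsion_quotient_iff, range_liftQ]

/-- Let `0 → M → N → L → 0` be a τ_q-exact sequence (i.e. `ker f`, `L/im g`,
`(im f + ker g)/im f` and `(im f + ker g)/ker g` are all Q-torsion) with `N`
τ_q-finitely presented.  Then `L` is τ_q-finitely presented if and only if `M` is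
τ_q-finitely generated. -/
theorem statement6 (R : Type u) [CommRing R]
    (M : Type v) [AddCommGroup M] [Module R M]
    (N : Type v) [AddCommGroup N] [Module R N]
    (L : Type v) [AddCommGroup L] [Module R L]
    (f : M →ₗ[R] N) (g : N →ₗ[R] L)
    (h1 : IsQTorsion R (LinearMap.ker f))
    (h2 : IsQTorsion R (L ⧸ LinearMap.range g))
    (h3 : IsQTorsion R (↥(LinearMap.range f ⊔ LinearMap.ker g) ⧸
      Submodule.comap (LinearMap.range f ⊔ LinearMap.ker g).subtype (LinearMap.range f)))
    (h4 : IsQTorsion R (↥(LinearMap.range f ⊔ LinearMap.ker g) ⧸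
      Submodule.comap (LinearMap.range f ⊔ LinearMap.ker g).subtype (LinearMap.ker g)))
    (hN : IsTauQFP R N) :
    IsTauQFP R L ↔ IsTauQFG R M := by
  obtain ⟨P, _, _, ψ, _, hkerψ, hcokψ⟩ := hN
  rw [isQTorsion_submodule_iff] at h1 hkerψ
  rw [isQTorsion_quotient_iff] at h2 hcokψ
  rw [isQTorsion_subquotient_iff] at h3 h4
  have hgψ : (range (g ∘ₗ ψ)).qSat = ⊤ := by
    refine eq_top_iff.mpr (h2.ge.trans ?_)
    calc (range g).qSat = ((range ψ).qSat.map g).qSat := by rw [hcokψ, Submodule.map_top]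
      _ ≤ (range (g ∘ₗ ψ)).qSat := by
        rw [range_comp, ← qSat_qSat (F := (range ψ).map g)]
        exact qSat_mono (map_qSat_le g)
  calc IsTauQFP R L ↔ (ker (g ∘ₗ ψ)).IsQFG := isTauQFP_iff_isQFG_ker _ hgψ
    _ ↔ (ker g ⊓ range ψ).IsQFG := by
      rw [← isQFG_comap_iff hkerψ inf_le_right, comap_inf, range_le_iff_comap.mp le_rfl,
        inf_top_eq, ker_comp]
    _ ↔ (ker g).IsQFG := isQFG_iff_of_le_qSat inf_le_left
      (by rw [qSat_inf, hcokψ, inf_top_eq]; exact le_qSat)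
    _ ↔ (range f ⊔ ker g).IsQFG := isQFG_iff_of_le_qSat le_sup_right h4
    _ ↔ (range f).IsQFG := (isQFG_iff_of_le_qSat le_sup_left h3).symm
    _ ↔ (⊤ : Submodule R M).IsQFG := by
      rw [← isQFG_comap_iff h1 le_rfl, range_le_iff_comap.mp le_rfl]
    _ ↔ IsTauQFG R M := isQFG_top_iff
end

section
/- Let R be a commutative ring. Every τ_q-flat R-module is flat if and only if R is a DQ-ring, i.e., if and only if every finitely generated semi-regular ideal of R is equal to R. -/
/-!
If `a` kills `M`, it kills every `M ⊗ Pₙ` and hence `Tor₁(M, N)`, which is a subquotient of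
`M ⊗ P₁`; so `R ⧸ I` is τ_q-flat for every `I ∈ Q`. If `R ⧸ I` is flat then `I = I²`, and a
finitely generated idempotent ideal is generated by an idempotent `e`. Since `1 - e` kills `I`,
it kills the dense subideal of `I`, so `e = 1`.

Conversely, over a DQ-ring every Q-torsion module is zero, so a τ_q-flat `M` has
`Tor₁(M, R ⧸ I) = 0`. Computing `Tor₁` with the resolution `⋯ → Q₁ → Q₀ → R` of `R ⧸ I`
spliced from a resolution `Q` of `I` shows that `M ⊗ I → M` is injective, i.e. `M` is flat.
-/

open Polynomial TensorProduct

universe u v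

open CategoryTheory in
/-- `Tor_1^R(M, N)` as an `R`-module. -/
noncomputable def Tor1Mod (R : Type u) [CommRing R] (M N : Type u)
    [AddCommGroup M] [Module R M] [AddCommGroup N] [Module R N] : ModuleCat R :=
  ((Tor (ModuleCat.{u} R) 1).obj (ModuleCat.of R M)).obj (ModuleCat.of R N)

/-- A module is *τ_q-flat* if `Tor_1^R(M, N)` is Q-torsion for every module `N`. -/
def IsTauQFlat (R : Type u) [CommRing R] (M : Type u) [AddCommGroup M] [Module R M] : Prop :=
  ∀ (N : Type u) [AddCommGroup N] [Module R N], IsQTorsion R (Tor1Mod R M N)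

open CategoryTheory MonoidalCategory

section

variable {R : Type u} [CommRing R]

lemma HomologicalComplex.annihilator_le_annihilator_homology {ι : Type*} {c : ComplexShape ι}
    (K : HomologicalComplex (ModuleCat.{u} R) c) (i : ι) :
    Module.annihilator R (K.X i) ≤ Module.annihilator R (K.homology i) :=
  ((K.iCycles i).hom.annihilator_le_of_injective
      ((ModuleCat.mono_iff_injective _).mp inferInstance)).trans
    ((K.homologyπ i).hom.annihilator_le_of_surjective
      ((ModuleCat.epi_iff_surjective _).mp inferInstance))

lemma Module.annihilator_le_annihilator_tensorProduct (M N : Type*) [AddCommGroup M]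
    [Module R M] [AddCommGroup N] [Module R N] :
    Module.annihilator R M ≤ Module.annihilator R (M ⊗[R] N) := by
  intro a ha
  rw [Module.mem_annihilator] at ha ⊢
  intro x
  induction x using TensorProduct.induction_on with
  | zero => rw [smul_zero]
  | tmul m n => rw [TensorProduct.smul_tmul', ha, TensorProduct.zero_tmul]
  | add x y hx hy => rw [smul_add, hx, hy, add_zero]

noncomputable def tor1IsoHomology (M : Type u) {N : Type u} [AddCommGroup M] [Module R M]
    [AddCommGroup N] [Module R N] (P : ProjectiveResolution (ModuleCat.of R N)) :
    Tor1Mod R M N ≅ ((((tensoringLeft _).obj (ModuleCat.of R M)).mapHomologicalComplex _).obj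
      P.complex).homology 1 :=
  P.isoLeftDerivedObj _ 1

lemma annihilator_le_annihilator_tor1Mod (M N : Type u) [AddCommGroup M] [Module R M]
    [AddCommGroup N] [Module R N] :
    Module.annihilator R M ≤ Module.annihilator R (Tor1Mod R M N) := by
  obtain ⟨P⟩ := HasProjectiveResolution.out (Z := ModuleCat.of R N)
  rw [(tor1IsoHomology M P).toLinearEquiv.annihilator_eq]
  exact (Module.annihilator_le_annihilator_tensorProduct M (P.complex.X 1)).trans
    (HomologicalComplex.annihilator_le_annihilator_homology
      ((((tensoringLeft _).obj (ModuleCat.of R M)).mapHomologicalComplex _).obj P.complex) 1)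

lemma Ideal.IsSemiregular.annihilator_eq_bot {I : Ideal R} (h : I.IsSemiregular) :
    Submodule.annihilator I = ⊥ := by
  obtain ⟨J, hJI, -, hJ⟩ := h
  exact eq_bot_iff.mpr (hJ ▸ Submodule.annihilator_mono hJI)

lemma isTauQFlat_quotient {I : Ideal R} (hfg : I.FG) (hI : I.IsSemiregular) :
    IsTauQFlat R (R ⧸ I) := by
  intro N _ _ x
  refine ⟨I, hfg, hI, fun a ha => ?_⟩
  have : a ∈ Module.annihilator R (R ⧸ I) := by rwa [Ideal.annihilator_quotient]
  exact Module.mem_annihilator.mp (annihilator_le_annihilator_tor1Mod _ N this) x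

lemma Ideal.eq_top_of_isIdempotentElem_of_annihilator_eq_bot {I : Ideal R} (hfg : I.FG)
    (h : IsIdempotentElem I) (hI : Submodule.annihilator I = ⊥) : I = ⊤ := by
  obtain ⟨e, he, rfl⟩ := (I.isIdempotentElem_iff_of_fg hfg).mp h
  have : 1 - e ∈ Submodule.annihilator (Ideal.span {e}) := by
    rw [Submodule.mem_annihilator_span_singleton, smul_eq_mul, sub_mul, one_mul, he.eq, sub_self]
  rw [hI, Submodule.mem_bot, sub_eq_zero] at this
  rw [← this]
  exact Ideal.span_singleton_one

namespace Submodule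

variable {F : Type u} [AddCommGroup F] [Module R F] (K : Submodule R F)
  (Q : ProjectiveResolution (ModuleCat.of R K))

noncomputable abbrev quotientResolutionComplex : ChainComplex (ModuleCat.{u} R) ℕ :=
  Q.complex.augment ((Q.π.f 0 : Q.complex.X 0 ⟶ ModuleCat.of R K) ≫ ModuleCat.ofHom K.subtype)
    ((Category.assoc _ _ _).symm.trans ((Q.complex_d_comp_π_f_zero =≫ _).trans Limits.zero_comp))

lemma quotientResolutionComplex_exactAt_one :
    (quotientResolutionComplex K Q).ExactAt 1 := by
  rw [HomologicalComplex.exactAt_iff' _ 2 1 0 (by simp) (by simp),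
    ShortComplex.moduleCat_exact_iff]
  exact fun x hx => (ShortComplex.moduleCat_exact_iff _).mp Q.exact₀ x (Subtype.ext hx)

lemma quotientResolutionComplex_exactAt_succ_succ (n : ℕ) :
    (quotientResolutionComplex K Q).ExactAt (n + 2) := by
  have := Q.complex_exactAt_succ n
  rw [HomologicalComplex.exactAt_iff' _ (n + 2) (n + 1) n (by simp) (by simp)] at this
  rw [HomologicalComplex.exactAt_iff' _ (n + 3) (n + 2) (n + 1) (by simp) (by simp)]
  -- above degree `0` the augmented complex is `Q` shifted by one, definitionally
  exact this

variable [Module.Projective R F]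

noncomputable def quotientResolution : ProjectiveResolution (ModuleCat.of R (F ⧸ K)) where
  complex := quotientResolutionComplex K Q
  projective
    | 0 => (IsProjective.iff_projective.{u, u} _).mp inferInstance
    | n + 1 => Q.projective n
  π := (ChainComplex.toSingle₀Equiv _ _).symm ⟨ModuleCat.ofHom K.mkQ, by
    ext x
    exact (Submodule.Quotient.mk_eq_zero K).mpr (Q.π.f 0 x).2⟩
  quasiIso := ⟨fun n => by
    rcases n with _ | _ | n
    · rw [ChainComplex.quasiIsoAt₀_iff, ShortComplex.quasiIso_iff_of_zeros']
      · constructor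
        · rw [ShortComplex.moduleCat_exact_iff]
          intro x hx
          obtain ⟨q, hq⟩ := (ModuleCat.epi_iff_surjective (Q.π.f 0)).mp inferInstance
            ⟨x, (Submodule.Quotient.mk_eq_zero K).mp hx⟩
          exact ⟨q, congrArg Subtype.val hq⟩
        · exact (ModuleCat.epi_iff_surjective _).mpr K.mkQ_surjective
      all_goals rfl
    · rw [quasiIsoAt_iff_exactAt' _ _ (ChainComplex.exactAt_succ_single_obj _ _)]
      exact quotientResolutionComplex_exactAt_one K Q
    · rw [quasiIsoAt_iff_exactAt' _ _ (ChainComplex.exactAt_succ_single_obj _ _)]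
      exact quotientResolutionComplex_exactAt_succ_succ K Q n⟩

end Submodule

lemma exists_lTensor_eq_of_subsingleton_tor1 (M : Type u) {N : Type u} [AddCommGroup M]
    [Module R M] [AddCommGroup N] [Module R N] [Subsingleton (Tor1Mod R M N)]
    (P : ProjectiveResolution (ModuleCat.of R N)) (y : M ⊗[R] P.complex.X 1)
    (hy : (P.complex.d 1 0).hom.lTensor M y = 0) :
    ∃ z, (P.complex.d 2 1).hom.lTensor M z = y := by
  have hP : ((((tensoringLeft _).obj (ModuleCat.of R M)).mapHomologicalComplex _).obj
      P.complex).ExactAt 1 := by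
    rw [HomologicalComplex.exactAt_iff_isZero_homology]
    exact (ModuleCat.isZero_of_subsingleton _).of_iso (tor1IsoHomology M P).symm
  rw [HomologicalComplex.exactAt_iff' _ 2 1 0 (by simp) (by simp),
    ShortComplex.moduleCat_exact_iff] at hP
  exact hP y hy

lemma Submodule.lTensor_subtype_injective_of_subsingleton_tor1 {F : Type u} [AddCommGroup F]
    [Module R F] [Module.Projective R F] (K : Submodule R F) (M : Type u) [AddCommGroup M]
    [Module R M] [Subsingleton (Tor1Mod R M (F ⧸ K))] :
    Function.Injective (K.subtype.lTensor M) := by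
  obtain ⟨Q⟩ := HasProjectiveResolution.out (Z := ModuleCat.of R K)
  rw [injective_iff_map_eq_zero]
  intro x hx
  let π₀ : Q.complex.X 0 →ₗ[R] K := (Q.π.f 0).hom
  have hπ₀ : Function.Surjective π₀ := (ModuleCat.epi_iff_surjective (Q.π.f 0)).mp inferInstance
  obtain ⟨y, rfl⟩ := LinearMap.lTensor_surjective M hπ₀ x
  rw [← LinearMap.lTensor_comp_apply] at hx
  obtain ⟨z, rfl⟩ : ∃ z : M ⊗[R] Q.complex.X 1, (Q.complex.d 1 0).hom.lTensor M z = y :=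
    exists_lTensor_eq_of_subsingleton_tor1 M (K.quotientResolution Q) y hx
  have hdπ : π₀ ∘ₗ (Q.complex.d 1 0).hom = 0 :=
    congrArg ModuleCat.Hom.hom Q.complex_d_comp_π_f_zero
  rw [← LinearMap.lTensor_comp_apply, hdπ, LinearMap.lTensor_zero, LinearMap.zero_apply]

lemma IsQTorsion.subsingleton {M : Type*} [AddCommGroup M] [Module R M]
    (hR : ∀ I : Ideal R, I.FG → I.IsSemiregular → I = ⊤) (hM : IsQTorsion R M) :
    Subsingleton M := by
  refine subsingleton_of_forall_eq 0 fun m => ?_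
  obtain ⟨I, hfg, hI, hm⟩ := hM m
  simpa using hm 1 (by rw [hR I hfg hI]; trivial)

end

/-- Every τ_q-flat `R`-module is flat if and only if `R` is a DQ-ring, i.e. every
finitely generated semi-regular ideal of `R` equals `R`. -/
theorem statement11 (R : Type u) [CommRing R] :
    (∀ (M : Type u) [AddCommGroup M] [Module R M], IsTauQFlat R M → Module.Flat R M) ↔
      (∀ I : Ideal R, I.FG → I.IsSemiregular → I = ⊤) := by
  refine ⟨fun hflat I hfg hI => ?_, fun hR M _ _ hM => ?_⟩
  · have : I.Pure := hflat _ (isTauQFlat_quotient hfg hI)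
    exact I.eq_top_of_isIdempotentElem_of_annihilator_eq_bot hfg I.isIdempotentElem_of_pure
      hI.annihilator_eq_bot
  · refine Module.Flat.iff_lTensor_injective'.mpr fun I => ?_
    have := (hM (R ⧸ I)).subsingleton hR
    exact I.lTensor_subtype_injective_of_subsingleton_tor1 M
end

section
/- Let R be a commutative von Neumann regular ring. Then the Serre conjecture ring R⟨x⟩, defined as the localization of the polynomial ring R[x] at the multiplicative set of monic polynomials, is also a von Neumann regular ring. -/
/-!
Write `a = f.coeff n` for the top coefficient of `f` in degree `n`, choose `b` with `a = a b a`,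
and put `e = a b`, an idempotent of `R`. Then `f = e f + (1 - e) f`. The part `(1 - e) f` has
degree `< n`, so it is regular by induction. The part `e f` equals `a g` with
`g = b a b f + (1 - e) X^n` monic, so in `R⟨x⟩` it is the regular element `a` times a unit.
Two regular elements that are separated by an idempotent in this way have a regular sum.
-/

open Polynomial

universe u

/-- The multiplicative set of monic polynomials in `R[x]`. -/
def monicSubmonoid (R : Type*) [CommRing R] : Submonoid (Polynomial R) where
  carrier := {p | p.Monic}
  mul_mem' := fun ha hb => ha.mul hb
  one_mem' := Polynomial.monic_one

def IsVonNeumannRegularElem {S : Type*} [CommRing S] (a : S) : Prop :=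
  ∃ b, a = a * b * a

theorem isVonNeumannRegularElem_zero {S : Type*} [CommRing S] : IsVonNeumannRegularElem (0 : S) :=
  ⟨0, by ring⟩

namespace IsVonNeumannRegularElem

variable {S T : Type*} [CommRing S] [CommRing T]

theorem map {a : S} (ha : IsVonNeumannRegularElem a) (φ : S →+* T) :
    IsVonNeumannRegularElem (φ a) := by
  obtain ⟨b, hb⟩ := ha
  exact ⟨φ b, by rw [← map_mul, ← map_mul, ← hb]⟩

theorem mul_isUnit {a u : S} (ha : IsVonNeumannRegularElem a) (hu : IsUnit u) :
    IsVonNeumannRegularElem (a * u) := by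
  obtain ⟨b, hb⟩ := ha
  obtain ⟨u, rfl⟩ := hu
  refine ⟨↑u⁻¹ * b, ?_⟩
  calc a * u = a * b * a * u * (↑u⁻¹ * u) := by rw [Units.inv_mul, mul_one, ← hb]
    _ = a * u * (↑u⁻¹ * b) * (a * u) := by ring

theorem of_mul_isUnit {a u : S} (ha : IsVonNeumannRegularElem (a * u)) (hu : IsUnit u) :
    IsVonNeumannRegularElem a := by
  simpa only [mul_assoc, hu.mul_val_inv, mul_one] using ha.mul_isUnit hu.unit⁻¹.isUnit

/-- `E` acts as `1` on `p` and as `0` on `q`, so a quasi-inverse of `p + q` is glued from those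
of `p` and `q` as `E b₁ + (1 - E) b₂`. -/
theorem add_of_mul_eq {E p q : S} (hp : IsVonNeumannRegularElem p)
    (hq : IsVonNeumannRegularElem q) (hEp : E * p = p) (hEq : E * q = 0) :
    IsVonNeumannRegularElem (p + q) := by
  obtain ⟨b₁, h₁⟩ := hp
  obtain ⟨b₂, h₂⟩ := hq
  exact ⟨E * b₁ + (1 - E) * b₂, by
    linear_combination h₁ + h₂ - (b₁ * p - b₂ * p - 2 * b₂ * q) * hEp -
      (2 * b₁ * p + b₁ * q - b₂ * q) * hEq⟩

end IsVonNeumannRegularElem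

namespace Polynomial

variable {R : Type*} [CommRing R] {f : R[X]} {n : ℕ} {b : R}

theorem exists_monic_C_coeff_mul_eq (hf : f.degree ≤ n)
    (hb : f.coeff n = f.coeff n * b * f.coeff n) :
    ∃ g : R[X], g.Monic ∧ C (f.coeff n) * g = C (f.coeff n * b) * f := by
  set a := f.coeff n
  refine ⟨C (b * a * b) * f + C (1 - a * b) * X ^ n, ?_, ?_⟩
  · refine monic_of_degree_le n ?_ ?_
    · simp only [C_mul']
      exact degree_add_le_of_degree_le ((degree_smul_le _ _).trans hf)
        ((degree_smul_le _ _).trans (degree_X_pow_le n))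
    · rw [coeff_add, coeff_C_mul, coeff_C_mul, coeff_X_pow, if_pos rfl]
      linear_combination (-b) * hb
  · rw [mul_add, ← mul_assoc, ← mul_assoc, ← C_mul, ← C_mul]
    have hab : a * (1 - a * b) = 0 := by linear_combination hb
    rw [hab, C_0, zero_mul, add_zero]
    congr 2
    linear_combination (-b) * hb

theorem degree_C_one_sub_coeff_mul_lt (hf : f.degree ≤ n)
    (hb : f.coeff n = f.coeff n * b * f.coeff n) :
    (C (1 - f.coeff n * b) * f).degree < n := by
  rw [degree_lt_iff_coeff_zero]
  intro m hm
  rw [coeff_C_mul]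
  rcases hm.eq_or_lt with rfl | hlt
  · linear_combination hb
  · rw [(degree_le_iff_coeff_zero f n).mp hf m (by exact_mod_cast hlt), mul_zero]

end Polynomial

section SerreConjectureRing

variable {R : Type*} [CommRing R]

local notation "ι" => algebraMap R[X] (Localization (monicSubmonoid R))

theorem isVonNeumannRegularElem_algebraMap_of_degree_lt
    (h : ∀ a : R, IsVonNeumannRegularElem a) (n : ℕ) (f : R[X]) (hf : f.degree < n) :
    IsVonNeumannRegularElem (ι f) := by
  induction n generalizing f with
  | zero =>
    have hf0 : f = 0 := by
      ext m
      exact (degree_lt_iff_coeff_zero f 0).mp hf m m.zero_le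
    rw [hf0, map_zero]
    exact isVonNeumannRegularElem_zero
  | succ n ih =>
    have hfn : f.degree ≤ n := Order.le_of_lt_succ hf
    set a := f.coeff n
    obtain ⟨b, hb⟩ := h a
    obtain ⟨g, hg, hag⟩ := exists_monic_C_coeff_mul_eq hfn hb
    have he : a * b * (a * b) = a * b := by linear_combination (-b) * hb
    have hsplit : f = C (a * b) * f + C (1 - a * b) * f := by
      rw [← add_mul, ← C_add, add_sub_cancel, C_1, one_mul]
    have hleft : IsVonNeumannRegularElem (ι (C (a * b) * f)) := by
      rw [← hag, map_mul]
      exact (((h a).map C).map ι).mul_isUnit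
        (IsLocalization.map_units _ (⟨g, hg⟩ : monicSubmonoid R))
    have hright : IsVonNeumannRegularElem (ι (C (1 - a * b) * f)) :=
      ih _ (degree_C_one_sub_coeff_mul_lt hfn hb)
    rw [hsplit, map_add]
    refine hleft.add_of_mul_eq hright (E := ι (C (a * b))) ?_ ?_
    · rw [← map_mul, ← mul_assoc, ← C_mul, he]
    · rw [← map_mul, ← mul_assoc, ← C_mul, mul_sub, mul_one, he, sub_self, C_0, zero_mul,
        map_zero]

end SerreConjectureRing

/-- If `R` is a von Neumann regular commutative ring, then the Serre conjecture
ring `R⟨x⟩`, the localization of `R[x]` at the monic polynomials, is also von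
Neumann regular. -/
theorem statement13 (R : Type u) [CommRing R] (h : ∀ a : R, ∃ b : R, a = a * b * a) :
    ∀ a : Localization (monicSubmonoid R), ∃ b, a = a * b * a := by
  intro z
  obtain ⟨⟨f, s⟩, rfl⟩ := IsLocalization.mk'_surjective (monicSubmonoid R) z
  refine IsVonNeumannRegularElem.of_mul_isUnit ?_ (IsLocalization.map_units _ s)
  rw [IsLocalization.mk'_spec]
  exact isVonNeumannRegularElem_algebraMap_of_degree_lt h _ f
    (degree_le_natDegree.trans_lt (by exact_mod_cast f.natDegree.lt_succ_self))
end

section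
/- Let R be a commutative ring in which every ideal is τ_q-finitely generated (a τ_q-Noetherian ring). Then R is τ_q-coherent: every τ_q-finitely generated ideal of R is τ_q-finitely presented. -/
open Polynomial TensorProduct

universe u v

/-!
Over a τ_q-Noetherian ring every submodule of `Rⁿ` is τ_q-finitely generated, by induction on `n`:
τ_q-finite generation passes from `ker f` and `range f` to the source of `f`. This extension
property holds because the ideals `N.colon {m}` that are semi-regular are stable under finite
intersections, which makes "Q-torsion modulo `N`" idempotent. Now if `N ≤ I` is finitely generated
with `I ⧸ N` Q-torsion, write `N` as the range of `g : Rⁿ → I` and pick a finitely generated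
`K ≤ ker g` with `ker g ⧸ K` Q-torsion: the induced map `Rⁿ ⧸ K → I` has Q-torsion kernel
`ker g ⧸ K` and cokernel `I ⧸ N`, and `Rⁿ ⧸ K` is finitely presented.
-/

namespace Ideal

variable {R : Type u} [CommRing R] {I J : Ideal R}

theorem IsSemiregular.mono (hIJ : I ≤ J) (hI : I.IsSemiregular) : J.IsSemiregular :=
  let ⟨D, hDI, hD⟩ := hI
  ⟨D, hDI.trans hIJ, hD⟩

theorem isSemiregular_top : (⊤ : Ideal R).IsSemiregular := by
  refine ⟨⊤, le_rfl, ⟨{1}, by simp⟩, eq_bot_iff.mpr fun r hr => ?_⟩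
  simpa using Submodule.mem_annihilator.mp hr 1 Submodule.mem_top

theorem IsSemiregular.mul (hI : I.IsSemiregular) (hJ : J.IsSemiregular) :
    (I * J).IsSemiregular := by
  obtain ⟨D₁, hD₁I, hD₁fg, hD₁⟩ := hI
  obtain ⟨D₂, hD₂J, hD₂fg, hD₂⟩ := hJ
  refine ⟨D₁ * D₂, mul_mono hD₁I hD₂J, hD₁fg.mul hD₂fg, eq_bot_iff.mpr fun r hr => ?_⟩
  rw [Submodule.mem_annihilator] at hr
  have hrD₁ : ∀ d₁ ∈ D₁, r * d₁ = 0 := fun d₁ hd₁ => by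
    have : r * d₁ ∈ Submodule.annihilator D₂ := Submodule.mem_annihilator.mpr fun d₂ hd₂ => by
      simpa [mul_assoc] using hr _ (mul_mem_mul hd₁ hd₂)
    simpa [hD₂] using this
  have : r ∈ Submodule.annihilator D₁ := Submodule.mem_annihilator.mpr hrD₁
  simpa [hD₁] using this

theorem IsSemiregular.inf (hI : I.IsSemiregular) (hJ : J.IsSemiregular) :
    (I ⊓ J).IsSemiregular :=
  (hI.mul hJ).mono mul_le_inf

end Ideal

section

variable {R : Type u} [CommRing R] {M B : Type*} [AddCommGroup M] [Module R M]
  [AddCommGroup B] [Module R B]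

theorem isQTorsion_iff : IsQTorsion R M ↔ ∀ m : M, (R ∙ m).annihilator.IsSemiregular := by
  refine forall_congr' fun m => ⟨fun ⟨I, _, hI, hIm⟩ => hI.mono fun a ha => ?_, fun h => ?_⟩
  · exact (Submodule.mem_annihilator_span_singleton m a).mpr (hIm a ha)
  · obtain ⟨D, hD, hDfg, hDdense⟩ := h
    exact ⟨D, hDfg, ⟨D, le_rfl, hDfg, hDdense⟩,
      fun a ha => (Submodule.mem_annihilator_span_singleton m a).mp (hD ha)⟩

theorem isQTorsion_quotient_iff_s16 (N : Submodule R M) :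
    IsQTorsion R (M ⧸ N) ↔ ∀ m : M, (N.colon {m}).IsSemiregular := by
  rw [isQTorsion_iff, N.mkQ_surjective.forall]
  refine forall_congr' fun m => ?_
  rw [← Submodule.colon_span, ← Submodule.annihilator_map_mkQ_eq_colon, Submodule.map_span,
    Set.image_singleton]

theorem isQTorsion_of_subsingleton [Subsingleton M] : IsQTorsion R M :=
  fun _ => ⟨⊤, ⟨{1}, by simp⟩, Ideal.isSemiregular_top, fun _ _ => Subsingleton.elim _ _⟩

theorem Submodule.isSemiregular_colon_of_forall_smul (N : Submodule R M) (m : M) {J : Ideal R}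
    (hJ : J.IsSemiregular) (h : ∀ a ∈ J, (N.colon {a • m}).IsSemiregular) :
    (N.colon {m}).IsSemiregular := by
  classical
  obtain ⟨D, hDJ, ⟨u, rfl⟩, hDdense⟩ := hJ
  have hD : Ideal.IsSemiregular (span R ↑u) := ⟨_, le_rfl, ⟨u, rfl⟩, hDdense⟩
  let K : Ideal R := u.inf fun a => N.colon {a • m}
  have hK : K.IsSemiregular :=
    Finset.inf_induction Ideal.isSemiregular_top (fun _ h₁ _ h₂ => h₁.inf h₂)
      fun a ha => h a (hDJ (subset_span ha))
  have hDK : span R ↑u * K ≤ N.colon {m} := Ideal.mul_le.mpr fun r hr s hs => by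
    have hspan : span R ↑u ≤ N.colon {s • m} := Ideal.span_le.mpr fun a ha => by
      have : s ∈ N.colon {a • m} := Finset.inf_le (f := fun a => N.colon {a • m}) ha hs
      simpa [smul_comm a s] using this
    simpa [mul_smul] using hspan hr
  exact (hD.mul hK).mono hDK

theorem Submodule.exists_fg_map_eq_of_le_range {f : M →ₗ[R] B} {L : Submodule R B} (hL : L.FG)
    (hLf : L ≤ LinearMap.range f) : ∃ L' : Submodule R M, L'.FG ∧ L'.map f = L := by
  classical
  obtain ⟨t, rfl⟩ := hL
  have ht : (t : Set B) ⊆ f '' Set.univ := by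
    rw [Set.image_univ, ← LinearMap.coe_range]
    exact subset_span.trans hLf
  obtain ⟨s, -, rfl⟩ := Finset.subset_set_image_iff.mp ht
  exact ⟨span R s, fg_span s.finite_toSet, by rw [map_span, Finset.coe_image]⟩

theorem Submodule.exists_fg_le_of_isTauQFG (K : Submodule R M) (hK : IsTauQFG R K) :
    ∃ A ≤ K, A.FG ∧ ∀ m ∈ K, (A.colon {m}).IsSemiregular := by
  obtain ⟨A, hAfg, hA⟩ := hK
  rw [isQTorsion_quotient_iff_s16] at hA
  refine ⟨A.map K.subtype, map_subtype_le K A, hAfg.map _, fun m hm => (hA ⟨m, hm⟩).mono ?_⟩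
  intro r hr
  simpa using mem_map_of_mem (f := K.subtype) (mem_colon_singleton.mp hr)

theorem isTauQFG_of_isTauQFG_ker_of_isTauQFG_range (f : M →ₗ[R] B)
    (hker : IsTauQFG R (LinearMap.ker f)) (hrange : IsTauQFG R (LinearMap.range f)) :
    IsTauQFG R M := by
  obtain ⟨A, hAf, hAfg, hA⟩ := Submodule.exists_fg_le_of_isTauQFG _ hker
  obtain ⟨L, hLf, hLfg, hL⟩ := Submodule.exists_fg_le_of_isTauQFG _ hrange
  obtain ⟨L', hL'fg, hL'L⟩ := Submodule.exists_fg_map_eq_of_le_range hLfg hLf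
  refine ⟨A ⊔ L', hAfg.sup hL'fg, (isQTorsion_quotient_iff_s16 _).mpr fun m => ?_⟩
  refine (A ⊔ L').isSemiregular_colon_of_forall_smul m (hL _ ⟨m, rfl⟩) fun a ha => ?_
  obtain ⟨z, hz, hfz⟩ : a • f m ∈ L'.map f := hL'L ▸ Submodule.mem_colon_singleton.mp ha
  have hker : a • m - z ∈ LinearMap.ker f := by simp [hfz]
  refine (hA _ hker).mono fun r hr => Submodule.mem_colon_singleton.mpr ?_
  have hsplit : r • a • m = r • (a • m - z) + r • z := by rw [smul_sub, sub_add_cancel]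
  rw [hsplit]
  exact add_mem (Submodule.mem_sup_left (Submodule.mem_colon_singleton.mp hr))
    (Submodule.mem_sup_right (L'.smul_mem r hz))

theorem isTauQFG_of_subsingleton [Subsingleton M] : IsTauQFG R M :=
  ⟨⊥, Submodule.fg_bot, isQTorsion_of_subsingleton⟩

theorem isTauQFG_of_injective {f : M →ₗ[R] B} (hf : Function.Injective f)
    (hrange : IsTauQFG R (LinearMap.range f)) : IsTauQFG R M :=
  have : Subsingleton (LinearMap.ker f) := by
    rw [LinearMap.ker_eq_bot.mpr hf]
    infer_instance
  isTauQFG_of_isTauQFG_ker_of_isTauQFG_range f isTauQFG_of_subsingleton hrange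

end

theorem isTauQFG_of_submodule_pi {R : Type u} [CommRing R]
    (hR : ∀ I : Ideal R, IsTauQFG R I) (n : ℕ) (K : Submodule R (Fin n → R)) :
    IsTauQFG R K := by
  induction n with
  | zero => exact isTauQFG_of_subsingleton
  | succ n ih =>
    let head : K →ₗ[R] R := LinearMap.proj 0 ∘ₗ K.subtype
    let tail : LinearMap.ker head →ₗ[R] Fin n → R :=
      LinearMap.funLeft R R Fin.succ ∘ₗ K.subtype ∘ₗ (LinearMap.ker head).subtype
    have htail : Function.Injective tail := fun x y hxy => by
      refine Subtype.ext <| Subtype.ext <| funext <| Fin.cases ?_ fun i => congrFun hxy i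
      exact (LinearMap.mem_ker.mp x.2).trans (LinearMap.mem_ker.mp y.2).symm
    exact isTauQFG_of_isTauQFG_ker_of_isTauQFG_range head
      (isTauQFG_of_injective htail (ih _)) (hR _)

theorem isTauQFP_of_isTauQFG {R : Type u} [CommRing R]
    (hR : ∀ (n : ℕ) (K : Submodule R (Fin n → R)), IsTauQFG R K)
    {M : Type u} [AddCommGroup M] [Module R M] (hM : IsTauQFG R M) : IsTauQFP R M := by
  obtain ⟨N, hNfg, hN⟩ := hM
  obtain ⟨n, g, rfl⟩ := (Submodule.fg_iff_exists_fin_linearMap R M).mp hNfg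
  obtain ⟨K, hKg, hKfg, hK⟩ := Submodule.exists_fg_le_of_isTauQFG _ (hR n (LinearMap.ker g))
  refine ⟨_ ⧸ K, inferInstance, inferInstance, K.liftQ g hKg, ?_, ?_, ?_⟩
  · exact Module.finitePresentation_of_free_of_surjective K.mkQ K.mkQ_surjective
      (by rwa [Submodule.ker_mkQ])
  · refine isQTorsion_iff.mpr fun x => ?_
    obtain ⟨y, hy, hxy⟩ : x.1 ∈ (LinearMap.ker g).map K.mkQ := Submodule.ker_liftQ K g hKg ▸ x.2
    refine (hK y hy).mono fun r hr => (Submodule.mem_annihilator_span_singleton x r).mpr ?_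
    ext
    simpa [← hxy, ← Submodule.Quotient.mk_smul, Submodule.Quotient.mk_eq_zero] using hr
  · rwa [Submodule.range_liftQ]

/-- Every τ_q-Noetherian ring (every ideal is τ_q-finitely generated) is
τ_q-coherent (every τ_q-finitely generated ideal is τ_q-finitely presented). -/
theorem statement16 (R : Type u) [CommRing R]
    (hNoeth : ∀ I : Ideal R, IsTauQFG R I) :
    ∀ I : Ideal R, IsTauQFG R I → IsTauQFP R I :=
  fun _ => isTauQFP_of_isTauQFG (isTauQFG_of_submodule_pi hNoeth)
end
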